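/- Let m, n ∈ ℕ with n ≥ m ≥ 3, (m-1) ∤ (n-2), and n = q(m-2) + a with q ≥ 1 and 2 ≤ a ≤ m-3. Let T_m ≠ K_{1,m-1} be a tree on m vertices. If n ≥ (a-3)(m-1) + 3 and r(T_m, K_{1,n-1}) ≤ m+n-3 holds, then r(T_m, K_{1,n-1}) = m+n-3. -/

import Mathlib

open SimpleGraph

/-- `G` contains a copy of `H` as a subgraph. -/
def Contains {V W : Type*} (G : SimpleGraph V) (H : SimpleGraph W) : Prop :=
  ∃ f : W ↪ V, ∀ a b, H.Adj a b → G.Adj (f a) (f b)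

/-- The Turán number `ex(p; L)`: the maximum number of edges in a simple graph
on `p` vertices not containing `L` as a subgraph. -/
noncomputable def exNum (p : ℕ) {W : Type*} (L : SimpleGraph W) : ℕ :=
  sSup {k | ∃ G : SimpleGraph (Fin p), ¬ Contains G L ∧ G.edgeSet.ncard = k}

/-- The Ramsey number `r(G₁, G₂)`: the least positive `N` such that every graph on
`N` vertices contains `G₁` or its complement contains `G₂`. -/
noncomputable def ramsey {V W : Type*} (G₁ : SimpleGraph V) (G₂ : SimpleGraph W) : ℕ :=
  sInf {N | 0 < N ∧ ∀ G : SimpleGraph (Fin N), Contains G G₁ ∨ Contains Gᶜ G₂}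

/-- The tree `Tₙ*` on `n` vertices with edges `v₀v₁, …, v₀v_{n-3}, v_{n-3}v_{n-2},
v_{n-2}v_{n-1}`. -/
def Tstar (n : ℕ) : SimpleGraph (Fin n) :=
  SimpleGraph.fromRel (fun a b =>
    (a.val = 0 ∧ 1 ≤ b.val ∧ b.val ≤ n - 3) ∨ (a.val = n - 3 ∧ b.val = n - 2) ∨
      (a.val = n - 2 ∧ b.val = n - 1))

/-- The star `K_{1,n-1}` on `n` vertices with center `0`. -/
def starGraphFin (n : ℕ) : SimpleGraph (Fin n) :=
  SimpleGraph.fromRel (fun a _ => a.val = 0)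


/-!
Only `m + n - 4 < r(T, K_{1,n-1})` needs proof, together with the fact that the set defining
`ramsey` is nonempty (otherwise `ramsey` is the junk value `sInf ∅ = 0`).

Nonemptiness: on `m (n - 1)` vertices, if the complement of `G` has maximum degree at most
`n - 2`, greedily picking a vertex and passing to its neighbourhood yields an `m`-clique of `G`,
which contains every graph on `m` vertices.

Lower bound: the disjoint union of `a - 2` cliques of order `m - 1` and `q - a + 3` cliques of
order `m - 2` has `m + n - 4` vertices; the connected graph `T` fits in none of its components,
and its complement is complete multipartite with maximum degree at most `n - 2`. The hypothesis
`n ≥ (a - 3)(m - 1) + 3` gives `a ≤ q + 3`, so that `q - a + 3` is not a truncated difference.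
-/

open Finset Fintype

theorem contains_iff_isContained {V W : Type*} {G : SimpleGraph V} {H : SimpleGraph W} :
    Contains G H ↔ H ⊑ G := by
  rw [isContained_iff_exists_le_comap]; rfl

theorem starGraphFin_eq_starGraph (n : ℕ) [NeZero n] : starGraphFin n = starGraph 0 := by
  ext a b
  rw [starGraphFin, starGraph, fromRel_adj, fromRel_adj, Fin.val_eq_zero_iff,
    Fin.val_eq_zero_iff]

namespace SimpleGraph

variable {U V W : Type*}

theorem starGraph_isContained_iff [Fintype W] [Fintype V] {H : SimpleGraph V}
    [DecidableRel H.Adj] (r : W) : starGraph r ⊑ H ↔ ∃ v, card W - 1 ≤ H.degree v := by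
  classical
  constructor
  · rintro ⟨f⟩
    exact ⟨f r, degree_starGraph_center (r := r) ▸ f.degree_le r⟩
  · rintro ⟨v, hv⟩
    have hcard : card {w // w ≠ r} ≤ card (H.neighborSet v) := by
      rwa [card_subtype_compl, card_subtype_eq, card_neighborSet_eq_degree]
    obtain ⟨e⟩ := Function.Embedding.nonempty_of_card_le hcard
    let f : W ↪ V := (Equiv.optionSubtypeNe r).symm.toEmbedding.trans
      ((e.trans (Function.Embedding.subtype _)).optionElim v
        fun ⟨w, hw⟩ => (H.mem_neighborSet _ _).mp (e w).2 |>.ne hw.symm)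
    have hf : ∀ w, w ≠ r → H.Adj (f r) (f w) := fun w hw => by
      have hfr : f r = v := by simp [f]
      have hfw : f w = e ⟨w, hw⟩ := by simp [f, hw]
      rw [hfr, hfw]
      exact (e _).2
    refine isContained_iff_exists_le_comap.mpr ⟨f, fun x y hxy => ?_⟩
    obtain ⟨hne, rfl | rfl⟩ := starGraph_adj.mp hxy
    · exact hf y hne.symm
    · exact (hf x hne).symm

theorem exists_isNClique_of_degree_compl_le [Fintype V] [DecidableEq V] {G : SimpleGraph V}
    [DecidableRel G.Adj] {d : ℕ} (hd : ∀ v, Gᶜ.degree v ≤ d) (k : ℕ) (s : Finset V)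
    (hs : k * (d + 1) ≤ #s) : ∃ t ⊆ s, G.IsNClique k t := by
  induction k generalizing s with
  | zero => exact ⟨∅, empty_subset s, isNClique_empty.mpr rfl⟩
  | succ k ih =>
    obtain ⟨v, hv⟩ : s.Nonempty := card_pos.mp (by nlinarith)
    have hcover : s ⊆ (s ∩ G.neighborFinset v) ∪ insert v (Gᶜ.neighborFinset v) := by
      intro w hw
      by_cases hvw : G.Adj v w
      · simp [hw, hvw]
      · rcases eq_or_ne v w with rfl | hne
        · simp
        · simp [compl_adj, hne, hvw]
    have hcard : k * (d + 1) ≤ #(s ∩ G.neighborFinset v) := by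
      have := (card_le_card hcover).trans
        ((card_union_le _ _).trans (Nat.add_le_add_left (card_insert_le _ _) _))
      rw [card_neighborFinset_eq_degree] at this
      nlinarith [hd v]
    obtain ⟨t, hts, ht⟩ := ih _ hcard
    refine ⟨insert v t, insert_subset hv (hts.trans inter_subset_left),
      ht.insert fun w hw => (mem_neighborFinset _ _ _).mp (mem_inter.mp (hts hw)).2⟩

def RamseyArrows (V : Type*) (G₁ : SimpleGraph U) (G₂ : SimpleGraph W) : Prop :=
  ∀ G : SimpleGraph V, G₁ ⊑ G ∨ G₂ ⊑ Gᶜ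

variable {G₁ : SimpleGraph U} {G₂ : SimpleGraph W}

theorem RamseyArrows.of_embedding {V' : Type*} (f : V ↪ V') (h : RamseyArrows V G₁ G₂) :
    RamseyArrows V' G₁ G₂ := fun G =>
  have hG : G.comap f ⊴ G := ⟨Embedding.comap f G⟩
  (h (G.comap f)).imp (·.trans hG.isContained)
    (·.trans (compl_isIndContained_compl.mpr hG).isContained)

theorem ramsey_eq_sInf_ramseyArrows :
    ramsey G₁ G₂ = sInf {N | 0 < N ∧ RamseyArrows (Fin N) G₁ G₂} := by
  simp only [ramsey, RamseyArrows, contains_iff_isContained]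

theorem card_lt_ramsey_of_not_ramseyArrows [Fintype V] {N : ℕ} (hN : 0 < N)
    (hArrows : RamseyArrows (Fin N) G₁ G₂) (hV : ¬ RamseyArrows V G₁ G₂) :
    card V < ramsey G₁ G₂ := by
  rw [ramsey_eq_sInf_ramseyArrows]
  obtain ⟨-, hR⟩ :=
    Nat.sInf_mem (s := {N | 0 < N ∧ RamseyArrows (Fin N) G₁ G₂}) ⟨N, hN, hArrows⟩
  by_contra! hle
  obtain ⟨f⟩ :=
    Function.Embedding.nonempty_of_card_le (α := Fin _) (β := V) (by simpa using hle)
  exact hV (hR.of_embedding f)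

theorem ramseyArrows_starGraph_of_card_le [Fintype U] [Fintype V] [Fintype W]
    (T : SimpleGraph U) (r : W) (hW : 2 ≤ card W) (hV : card U * (card W - 1) ≤ card V) :
    RamseyArrows V T (starGraph r) := by
  classical
  intro G
  refine or_iff_not_imp_right.mpr fun hstar => ?_
  have hd : ∀ v, Gᶜ.degree v ≤ card W - 2 := fun v => by
    by_contra! h
    exact hstar ((starGraph_isContained_iff r).mpr ⟨v, by omega⟩)
  obtain ⟨t, -, ht⟩ := exists_isNClique_of_degree_compl_le hd (card U) univ
    (by rw [card_univ, show card W - 2 + 1 = card W - 1 by omega]; exact hV)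
  exact (IsContained.of_le le_top).trans
    (not_free.mp (cliqueFree_iff_top_free.not.mp ht.not_cliqueFree))

section completeMultipartiteGraph

variable {ι : Type*} {β : ι → Type*}

theorem fst_eq_of_reachable_compl_completeMultipartiteGraph {x y : Σ i, β i}
    (h : (completeMultipartiteGraph β)ᶜ.Reachable x y) : x.1 = y.1 := by
  obtain ⟨p⟩ := h
  induction p with
  | nil => rfl
  | cons hadj _ ih => exact (not_not.mp ((compl_adj _ _ _).mp hadj).2).trans ih

theorem exists_card_le_of_isContained_compl_completeMultipartiteGraph [Fintype U]
    [∀ i, Fintype (β i)] {T : SimpleGraph U} (hT : T.Connected)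
    (h : T ⊑ (completeMultipartiteGraph β)ᶜ) : ∃ i, card U ≤ card (β i) := by
  obtain ⟨f⟩ := h
  obtain ⟨u₀⟩ := hT.nonempty
  have hfib (u : U) : (f u).1 = (f u₀).1 :=
    fst_eq_of_reachable_compl_completeMultipartiteGraph ((hT.preconnected u u₀).map f.toHom)
  refine ⟨(f u₀).1, ?_⟩
  exact card_le_of_injective (fun u => Equiv.sigmaSubtype _ ⟨f u, hfib u⟩)
    fun u v h => f.injective (congrArg Subtype.val ((Equiv.sigmaSubtype _).injective h))

theorem degree_completeMultipartiteGraph [Fintype ι] [DecidableEq ι] [∀ i, Fintype (β i)]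
    (v : Σ i, β i) :
    (completeMultipartiteGraph β).degree v = card (Σ i, β i) - card (β v.1) := by
  rw [← card_neighborSet_eq_degree, ← card_congr (Equiv.sigmaSubtype v.1),
    ← card_subtype_compl]
  exact card_congr (Equiv.subtypeEquivRight fun w => by simp [eq_comm])

theorem not_ramseyArrows_sigma_starGraph [Fintype ι] [∀ i, Fintype (β i)] [Fintype U]
    [Fintype W] {T : SimpleGraph U} (hT : T.Connected) (r : W)
    (hU : ∀ i, card (β i) < card U) (hW : ∀ i, card (Σ i, β i) - card (β i) < card W - 1) :
    ¬ RamseyArrows (Σ i, β i) T (starGraph r) := by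
  classical
  intro h
  rcases h (completeMultipartiteGraph β)ᶜ with hT' | hS
  · obtain ⟨i, hi⟩ := exists_card_le_of_isContained_compl_completeMultipartiteGraph hT hT'
    exact (hU i).not_ge hi
  · rw [compl_compl] at hS
    obtain ⟨v, hv⟩ := (starGraph_isContained_iff r).mp hS
    rw [degree_completeMultipartiteGraph] at hv
    exact (hW v.1).not_ge hv

end completeMultipartiteGraph

end SimpleGraph

theorem card_sigma_sumElim_fin (x y p : ℕ) :
    card (Σ i : Fin x ⊕ Fin y, Fin (Sum.elim (fun _ => p + 1) (fun _ => p) i)) =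
      x * (p + 1) + y * p := by
  simp

theorem stmt14_general {m n q a : ℕ} (hm : 3 ≤ m) (ha2 : 2 ≤ a)
    (hn : n = q * (m - 2) + a)
    (T : SimpleGraph (Fin m)) (hT : T.IsTree)
    (hbig : (a - 3) * (m - 1) + 3 ≤ n)
    (hub : ramsey T (starGraphFin n) ≤ m + n - 3) :
    ramsey T (starGraphFin n) = m + n - 3 := by
  have haq : a ≤ q + 3 := by
    by_contra! h
    obtain ⟨t, rfl⟩ : ∃ t, a = q + 4 + t := ⟨a - (q + 4), by omega⟩
    obtain ⟨k, rfl⟩ : ∃ k, m = k + 3 := ⟨m - 3, by omega⟩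
    rw [show q + 4 + t - 3 = q + 1 + t by omega, show k + 3 - 1 = k + 2 by omega,
      show k + 3 - 2 = k + 1 by omega] at *
    nlinarith
  have hcard : (a - 2) * (m - 2 + 1) + (q + 3 - a) * (m - 2) = m + n - 4 := by
    zify [ha2, haq, show 2 ≤ m by omega, show 4 ≤ m + n by omega] at hn ⊢
    linear_combination -hn
  have : NeZero n := ⟨by omega⟩
  rw [starGraphFin_eq_starGraph] at hub ⊢
  have hupper : RamseyArrows (Fin (m * (n - 1))) T (starGraph (0 : Fin n)) :=
    ramseyArrows_starGraph_of_card_le T 0 (by rw [Fintype.card_fin]; omega) (by simp)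
  have hlower := not_ramseyArrows_sigma_starGraph
    (β := fun i : Fin (a - 2) ⊕ Fin (q + 3 - a) =>
      Fin (Sum.elim (fun _ => m - 2 + 1) (fun _ => m - 2) i)) hT.connected (0 : Fin n)
    (by
      rintro (i | i) <;> simp only [Fintype.card_fin] <;>
        simp only [Sum.elim_inl, Sum.elim_inr] <;> omega)
    (by
      rintro (i | i) <;> simp only [card_sigma_sumElim_fin, hcard, Fintype.card_fin] <;>
        simp only [Sum.elim_inl, Sum.elim_inr] <;> omega)
  have hlt := card_lt_ramsey_of_not_ramseyArrows (Nat.mul_pos (by omega) (by omega)) hupper hlower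
  rw [card_sigma_sumElim_fin, hcard] at hlt
  omega

theorem stmt14 {m n q a : ℕ} (hm : 3 ≤ m) (hmn : m ≤ n)
    (hndvd : ¬ (m - 1) ∣ (n - 2)) (hq : 1 ≤ q) (ha2 : 2 ≤ a) (ham : a ≤ m - 3)
    (hn : n = q * (m - 2) + a)
    (T : SimpleGraph (Fin m)) (hT : T.IsTree)
    (hTne : ¬ Nonempty (T ≃g starGraphFin m))
    (hbig : (a - 3) * (m - 1) + 3 ≤ n)
    (hub : ramsey T (starGraphFin n) ≤ m + n - 3) :
    ramsey T (starGraphFin n) = m + n - 3 :=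
  stmt14_general hm ha2 hn T hT hbig hub
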